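/- arXiv:2210.11538 — 2 statements merged into one kernel-verified Lean document; each statement's English description precedes it below -/
import Mathlib

section
/- Let E be a real inner product space, W ⊆ E a convex set, μ > 0, L̂ ≥ 0, ε₁ ≥ 0, and let G be a nonempty finite index set. For each j ∈ G let F_j : E → ℝ be μ-strongly convex on W and L̂-Lipschitz on W, and let w_j* ∈ W be a minimizer of F_j over W (F_j(w_j*) ≤ F_j(w) for all w ∈ W). Assume ‖w_i* − w_j*‖ ≤ ε₁ for all i, j ∈ G. Define F_c := (1/|G|) Σ_{j∈G} F_j and let ω* ∈ W be a minimizer of F_c over W. Then for every i ∈ G, ‖w_i* − ω*‖ ≤ √(2 L̂ ε₁ / μ). -/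
/-- `f` is `μ`-strongly convex on the set `W` of a real inner product space. -/
def StronglyConvexOn {E : Type*} [NormedAddCommGroup E] [InnerProductSpace ℝ E]
    (W : Set E) (μ : ℝ) (f : E → ℝ) : Prop :=
  ∀ ⦃w : E⦄, w ∈ W → ∀ ⦃w' : E⦄, w' ∈ W → ∀ ⦃t : ℝ⦄, 0 ≤ t → t ≤ 1 →
    f (t • w + (1 - t) • w') ≤ t * f w + (1 - t) * f w' - μ / 2 * (t * (1 - t)) * ‖w - w'‖ ^ 2

/-- Lemma C.8: if the client losses `F j` (`j ∈ G`) are `μ`-strongly convex and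
`L̂`-Lipschitz on a convex set `W`, each `w_j* ∈ W` minimizes `F j` over `W`, and all the
`w_j*` are pairwise within distance `ε₁`, then any minimizer `ω*` over `W` of the averaged
loss `F_c = (1/|G|) Σ_{j∈G} F j` satisfies `‖w_i* − ω*‖ ≤ √(2 L̂ ε₁ / μ)` for every `i ∈ G`. -/
theorem dist_cluster_min_node_min {E : Type*} [NormedAddCommGroup E] [InnerProductSpace ℝ E]
    {ι : Type*} (W : Set E) (hW : Convex ℝ W) (μ : ℝ) (hμ : 0 < μ)
    (Lhat : ℝ) (hLhat : 0 ≤ Lhat) (ε₁ : ℝ) (hε₁ : 0 ≤ ε₁)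
    (G : Finset ι) (hG : G.Nonempty) (F : ι → E → ℝ) (wstar : ι → E) (ω : E)
    (hconv : ∀ j ∈ G, StronglyConvexOn W μ (F j))
    (hlip : ∀ j ∈ G, ∀ w ∈ W, ∀ w' ∈ W, |F j w - F j w'| ≤ Lhat * ‖w - w'‖)
    (hmem : ∀ j ∈ G, wstar j ∈ W)
    (hmin : ∀ j ∈ G, ∀ w ∈ W, F j (wstar j) ≤ F j w)
    (hclose : ∀ i ∈ G, ∀ j ∈ G, ‖wstar i - wstar j‖ ≤ ε₁)
    (hωmem : ω ∈ W)
    (hωmin : ∀ w ∈ W,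
      (1 / (G.card : ℝ)) * ∑ j ∈ G, F j ω ≤ (1 / (G.card : ℝ)) * ∑ j ∈ G, F j w) :
    ∀ i ∈ G, ‖wstar i - ω‖ ≤ Real.sqrt (2 * Lhat * ε₁ / μ) := by
  intro i hi
  have hn : (0:ℝ) < G.card := by exact_mod_cast Finset.card_pos.mpr hG
  set w := wstar i with hw
  have hwW : w ∈ W := hmem i hi
  set D : ℝ := ‖w - ω‖ ^ 2 with hD
  set S1 : ℝ := ∑ j ∈ G, F j w with hS1
  set S0 : ℝ := ∑ j ∈ G, F j ω with hS0
  -- Step 1: the averaged gap is at most Lhat * ε₁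
  have hgap : (1/(G.card:ℝ)) * S1 - (1/(G.card:ℝ)) * S0 ≤ Lhat * ε₁ := by
    have hterm : S1 - S0 ≤ (G.card : ℝ) * (Lhat * ε₁) := by
      rw [hS1, hS0, ← Finset.sum_sub_distrib]
      calc ∑ j ∈ G, (F j w - F j ω) ≤ ∑ j ∈ G, Lhat * ε₁ := by
            apply Finset.sum_le_sum
            intro j hj
            have h1 := hmin j hj ω hωmem
            have h2 : F j w - F j (wstar j) ≤ |F j w - F j (wstar j)| := le_abs_self _
            have h3 := hlip j hj w hwW (wstar j) (hmem j hj)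
            have h4 : Lhat * ‖w - wstar j‖ ≤ Lhat * ε₁ :=
              mul_le_mul_of_nonneg_left (hclose i hi j hj) hLhat
            linarith
        _ = (G.card : ℝ) * (Lhat * ε₁) := by
            rw [Finset.sum_const, nsmul_eq_mul]
    rw [← mul_sub]
    calc (1/(G.card:ℝ)) * (S1 - S0) ≤ (1/(G.card:ℝ)) * ((G.card:ℝ) * (Lhat * ε₁)) := by
          apply mul_le_mul_of_nonneg_left hterm; positivity
      _ = Lhat * ε₁ := by field_simp
  -- Step 2: quadratic growth at the minimizer ω, for each t ∈ (0,1)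
  have hquad : ∀ t : ℝ, 0 < t → t < 1 →
      μ/2 * (1 - t) * D ≤ (1/(G.card:ℝ)) * S1 - (1/(G.card:ℝ)) * S0 := by
    intro t ht0 ht1
    have hcomb : t • w + (1 - t) • ω ∈ W := hW hwW hωmem ht0.le (by linarith) (by ring)
    have hsum : ∑ j ∈ G, F j (t • w + (1-t) • ω) ≤
        ∑ j ∈ G, (t * F j w + (1-t) * F j ω - μ/2 * (t*(1-t)) * D) :=
      Finset.sum_le_sum fun j hj => hconv j hj hwW hωmem ht0.le ht1.le
    have hrhs : ∑ j ∈ G, (t * F j w + (1-t) * F j ω - μ/2 * (t*(1-t)) * D)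
        = t * S1 + (1-t) * S0 - (G.card:ℝ) * (μ/2 * (t*(1-t)) * D) := by
      rw [Finset.sum_sub_distrib, Finset.sum_add_distrib, ← Finset.mul_sum, ← Finset.mul_sum,
        Finset.sum_const, nsmul_eq_mul]
    have hmin' : S0 ≤ ∑ j ∈ G, F j (t • w + (1-t) • ω) := by
      have h := hωmin _ hcomb
      have := mul_le_mul_of_nonneg_left h (le_of_lt hn)
      calc S0 = (G.card:ℝ) * ((1/(G.card:ℝ)) * S0) := by field_simp
        _ ≤ (G.card:ℝ) * ((1/(G.card:ℝ)) * ∑ j ∈ G, F j (t • w + (1-t) • ω)) := this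
        _ = ∑ j ∈ G, F j (t • w + (1-t) • ω) := by field_simp
    have key : S0 ≤ t * S1 + (1-t) * S0 - (G.card:ℝ) * (μ/2 * (t*(1-t)) * D) := by
      rw [← hrhs]; exact hmin'.trans hsum
    -- divide by t and by card
    have key2 : (G.card:ℝ) * (μ/2 * (1-t) * D) ≤ S1 - S0 := by
      have h1 : t * ((G.card:ℝ) * (μ/2 * (1-t) * D)) ≤ t * (S1 - S0) := by nlinarith
      exact le_of_mul_le_mul_left h1 ht0
    have h2 : (1/(G.card:ℝ)) * ((G.card:ℝ) * (μ/2 * (1-t) * D)) ≤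
        (1/(G.card:ℝ)) * (S1 - S0) :=
      mul_le_mul_of_nonneg_left key2 (by positivity)
    calc μ/2 * (1-t) * D = (1/(G.card:ℝ)) * ((G.card:ℝ) * (μ/2 * (1-t) * D)) := by
          field_simp
      _ ≤ (1/(G.card:ℝ)) * (S1 - S0) := h2
      _ = (1/(G.card:ℝ)) * S1 - (1/(G.card:ℝ)) * S0 := by ring
  -- Step 3: let t → 0⁺
  have hlim : μ/2 * D ≤ (1/(G.card:ℝ)) * S1 - (1/(G.card:ℝ)) * S0 := by
    have htend : Filter.Tendsto (fun t : ℝ => μ/2 * (1 - t) * D) (nhdsWithin 0 (Set.Ioi 0))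
        (nhds (μ/2 * (1 - 0) * D)) := by
      apply Filter.Tendsto.mono_left _ nhdsWithin_le_nhds
      exact (Continuous.mul (continuous_const.mul
        (continuous_const.sub continuous_id)) continuous_const).tendsto 0
    have hev : ∀ᶠ t in nhdsWithin (0:ℝ) (Set.Ioi 0),
        (fun t : ℝ => μ/2 * (1 - t) * D) t ≤ (1/(G.card:ℝ)) * S1 - (1/(G.card:ℝ)) * S0 := by
      filter_upwards [Ioo_mem_nhdsGT_of_mem (Set.mem_Ico.mpr ⟨le_refl 0, one_pos⟩)]
        with t ht
      exact hquad t ht.1 ht.2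
    have := le_of_tendsto htend hev
    simpa using this
  -- Step 4: conclude
  have hD2 : D ≤ 2 * Lhat * ε₁ / μ := by
    rw [le_div_iff₀ hμ]
    nlinarith [hgap, hlim]
  have hnn : (0:ℝ) ≤ ‖w - ω‖ := norm_nonneg _
  rw [show Real.sqrt (2 * Lhat * ε₁ / μ) = Real.sqrt (2 * Lhat * ε₁ / μ) from rfl]
  exact (Real.le_sqrt hnn (by positivity)).mpr hD2
end

section
/- Let E be a real inner product space and let F : E → ℝ be differentiable, μ-strongly convex on E, and L-smooth on E, with 0 < μ ≤ L. Let w* ∈ E satisfy ∇F(w*) = 0, and let 0 < η ≤ 1/L. Then for every w ∈ E, ‖w − η·∇F(w) − w*‖² ≤ (1 − ημ)·‖w − w*‖². -/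
section Aux

variable {E : Type*} [NormedAddCommGroup E] [InnerProductSpace ℝ E] [CompleteSpace E]

local notation "⟪" x ", " y "⟫" => @inner ℝ _ _ x y

/-- Derivative of `F` along a line. -/
lemma line_hasDerivAt (F : E → ℝ) (hFd : Differentiable ℝ F) (x v : E) (t : ℝ) :
    HasDerivAt (fun s : ℝ => F (x + s • v)) ⟪gradient F (x + t • v), v⟫ t := by
  have h1 : HasDerivAt (fun s : ℝ => x + s • v) v t := by
    simpa using ((hasDerivAt_id t).smul_const v).const_add x
  have h2 := (hFd (x + t • v)).hasGradientAt.hasFDerivAt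
  have h3 := h2.comp_hasDerivAt t h1
  simpa [InnerProductSpace.toDual_apply_apply, Function.comp_def] using h3

/-- Gradient inequality for strongly convex functions. -/
lemma grad_ineq (μ : ℝ) (F : E → ℝ) (hFd : Differentiable ℝ F)
    (hconv : StronglyConvexOn Set.univ μ F) (x y : E) :
    ⟪gradient F x, y - x⟫ + μ / 2 * ‖y - x‖ ^ 2 ≤ F y - F x := by
  set v := y - x with hv
  have hd := line_hasDerivAt F hFd x v 0
  rw [zero_smul, add_zero] at hd
  have hslope : Filter.Tendsto (slope (fun s : ℝ => F (x + s • v)) 0) (nhdsWithin 0 (Set.Ioi 0))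
      (nhds ⟪gradient F x, v⟫) :=
    (hasDerivAt_iff_tendsto_slope.1 hd).mono_left
      (nhdsWithin_mono _ fun t ht => ne_of_gt ht)
  have htend2 : Filter.Tendsto (fun t : ℝ => μ / 2 * (1 - t) * ‖v‖ ^ 2)
      (nhdsWithin 0 (Set.Ioi 0)) (nhds (μ / 2 * ‖v‖ ^ 2)) := by
    have : Filter.Tendsto (fun t : ℝ => μ / 2 * (1 - t) * ‖v‖ ^ 2) (nhds 0)
        (nhds (μ / 2 * (1 - 0) * ‖v‖ ^ 2)) :=
      ((continuous_const.mul (continuous_const.sub continuous_id)).mul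
        continuous_const).tendsto 0
    simpa using this.mono_left nhdsWithin_le_nhds
  have hev : ∀ᶠ t in nhdsWithin (0:ℝ) (Set.Ioi 0),
      slope (fun s : ℝ => F (x + s • v)) 0 t + μ / 2 * (1 - t) * ‖v‖ ^ 2 ≤ F y - F x := by
    filter_upwards [Ioc_mem_nhdsGT_of_mem (Set.mem_Ico.2 ⟨le_refl (0:ℝ), one_pos⟩)]
      with t ht
    obtain ⟨ht0, ht1⟩ := ht
    have hline : x + t • v = t • y + (1 - t) • x := by
      rw [hv]; rw [smul_sub, sub_smul, one_smul]; abel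
    have hc := hconv (Set.mem_univ y) (Set.mem_univ x) ht0.le ht1
    rw [← hline] at hc
    have hslope_eq : slope (fun s : ℝ => F (x + s • v)) 0 t
        = (F (x + t • v) - F x) / t := by
      simp [slope_def_field, div_eq_mul_inv]
    rw [hslope_eq]
    rw [div_add' _ _ _ (ne_of_gt ht0), div_le_iff₀ ht0]
    have hx0 : F x = F (x + (0:ℝ) • v) := by simp
    nlinarith [hc, sq_nonneg ‖v‖, norm_sub_rev y x]
  have := le_of_tendsto (hslope.add htend2) hev
  linarith [this]

/-- Descent lemma for `L`-smooth functions. -/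
lemma descent_lemma (L : ℝ) (hL : 0 < L) (F : E → ℝ) (hFd : Differentiable ℝ F)
    (hsmooth : ∀ w w' : E, ‖gradient F w - gradient F w'‖ ≤ L * ‖w - w'‖) (x y : E) :
    F y ≤ F x + ⟪gradient F x, y - x⟫ + L / 2 * ‖y - x‖ ^ 2 := by
  set v := y - x with hv
  set c : ℝ := ⟪gradient F x, v⟫ with hc
  set k : ℝ := L / 2 * ‖v‖ ^ 2 with hk
  set ψ : ℝ → ℝ := fun t => F (x + t • v) - t * c - k * t ^ 2 with hψ
  have hder : ∀ t : ℝ, HasDerivAt ψ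
      (⟪gradient F (x + t • v), v⟫ - c - k * (2 * t)) t := by
    intro t
    have h1 := line_hasDerivAt F hFd x v t
    have h2 : HasDerivAt (fun s : ℝ => s * c) c t := by
      simpa using (hasDerivAt_id t).mul_const c
    have h3 : HasDerivAt (fun s : ℝ => k * s ^ 2) (k * (2 * t)) t := by
      have := (hasDerivAt_pow 2 t).const_mul k
      simpa [mul_comm] using this
    exact (h1.sub h2).sub h3
  have hψdiff : Differentiable ℝ ψ := fun t => (hder t).differentiableAt
  have hanti : AntitoneOn ψ (Set.Icc 0 1) := by
    apply antitoneOn_of_deriv_nonpos (convex_Icc 0 1) hψdiff.continuous.continuousOn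
      hψdiff.differentiableOn
    intro t ht
    rw [interior_Icc] at ht
    rw [(hder t).deriv]
    have hb : ⟪gradient F (x + t • v) - gradient F x, v⟫
        ≤ ‖gradient F (x + t • v) - gradient F x‖ * ‖v‖ := real_inner_le_norm _ _
    have hs := hsmooth (x + t • v) x
    have hnorm : ‖x + t • v - x‖ = t * ‖v‖ := by
      rw [add_sub_cancel_left, norm_smul, Real.norm_eq_abs, abs_of_pos ht.1]
    rw [hnorm] at hs
    have : ⟪gradient F (x + t • v), v⟫ - c
        = ⟪gradient F (x + t • v) - gradient F x, v⟫ := by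
      rw [inner_sub_left]
    rw [this]
    have hΔ : ⟪gradient F (x + t • v) - gradient F x, v⟫ ≤ L * (t * ‖v‖) * ‖v‖ :=
      hb.trans (by nlinarith [norm_nonneg v])
    nlinarith [ht.1]
  have h01 := hanti (Set.mem_Icc.2 ⟨le_refl (0:ℝ), zero_le_one⟩)
    (Set.mem_Icc.2 ⟨zero_le_one, le_refl (1:ℝ)⟩) zero_le_one
  have hψ0 : ψ 0 = F x := by simp [hψ]
  have hψ1 : ψ 1 = F y - c - k := by
    simp only [hψ, one_smul, one_pow, mul_one, one_mul]
    rw [hv, add_sub_cancel]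
  rw [hψ0, hψ1] at h01
  rw [hc, hk] at h01
  linarith

/-- One-sided co-coercivity estimate. -/
lemma cocoercive_aux (μ L : ℝ) (hμ : 0 < μ) (hL : 0 < L) (F : E → ℝ)
    (hFd : Differentiable ℝ F) (hconv : StronglyConvexOn Set.univ μ F)
    (hsmooth : ∀ w w' : E, ‖gradient F w - gradient F w'‖ ≤ L * ‖w - w'‖) (a b : E) :
    F b + ⟪gradient F b, a - b⟫ + 1 / (2 * L) * ‖gradient F a - gradient F b‖ ^ 2 ≤ F a := by
  set g : E := gradient F a - gradient F b with hg
  set z : E := a - (1 / L) • g with hz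
  have hdes := descent_lemma L hL F hFd hsmooth a z
  have hgi := grad_ineq μ F hFd hconv b z
  have hza : z - a = -((1 / L) • g) := by rw [hz]; abel
  have hzb : z - b = (a - b) - (1 / L) • g := by rw [hz]; abel
  have e1 : ⟪gradient F a, z - a⟫ = -(1 / L * ⟪gradient F a, g⟫) := by
    rw [hza, inner_neg_right, real_inner_smul_right]
  have e2 : ‖z - a‖ ^ 2 = (1 / L) ^ 2 * ‖g‖ ^ 2 := by
    rw [hza, norm_neg, norm_smul, mul_pow, Real.norm_eq_abs, sq_abs]
  have e3 : ⟪gradient F b, z - b⟫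
      = ⟪gradient F b, a - b⟫ - 1 / L * ⟪gradient F b, g⟫ := by
    rw [hzb, inner_sub_right, real_inner_smul_right]
  have e4 : ⟪gradient F a, g⟫ - ⟪gradient F b, g⟫ = ‖g‖ ^ 2 := by
    rw [← inner_sub_left, ← hg, real_inner_self_eq_norm_sq]
  have hμ2 : 0 ≤ μ / 2 * ‖z - b‖ ^ 2 := by positivity
  rw [e1, e2] at hdes
  rw [e3] at hgi
  have hLne : L ≠ 0 := ne_of_gt hL
  have : F b + ⟪gradient F b, a - b⟫ - 1 / L * ⟪gradient F b, g⟫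
      ≤ F a - 1 / L * ⟪gradient F a, g⟫ + L / 2 * ((1 / L) ^ 2 * ‖g‖ ^ 2) := by
    linarith
  have hfield : L / 2 * ((1 / L) ^ 2 * ‖g‖ ^ 2) = 1 / (2 * L) * ‖g‖ ^ 2 := by
    field_simp
  rw [hfield] at this
  have e5 : 1 / L * ⟪gradient F a, g⟫ - 1 / L * ⟪gradient F b, g⟫
      = 1 / L * ‖g‖ ^ 2 := by rw [← mul_sub, e4]
  have h2L : 1 / L * ‖g‖ ^ 2 - 1 / (2 * L) * ‖g‖ ^ 2 = 1 / (2 * L) * ‖g‖ ^ 2 := by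
    field_simp; ring
  linarith

end Aux

/-- One-step gradient-descent contraction: if `F` is differentiable, `μ`-strongly convex
and `L`-smooth on all of `E`, `∇F(w*) = 0`, and `0 < η ≤ 1/L`, then
`‖w − η ∇F(w) − w*‖² ≤ (1 − ημ) ‖w − w*‖²` for every `w`. -/
theorem gradient_step_contraction {E : Type*} [NormedAddCommGroup E]
    [InnerProductSpace ℝ E] [CompleteSpace E] (μ L : ℝ) (hμ : 0 < μ) (hμL : μ ≤ L)
    (F : E → ℝ) (hFd : Differentiable ℝ F)
    (hconv : StronglyConvexOn Set.univ μ F)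
    (hsmooth : ∀ w w' : E, ‖gradient F w - gradient F w'‖ ≤ L * ‖w - w'‖)
    (wstar : E) (hstar : gradient F wstar = 0)
    (η : ℝ) (hη0 : 0 < η) (hη : η ≤ 1 / L) :
    ∀ w : E, ‖w - η • gradient F w - wstar‖ ^ 2 ≤ (1 - η * μ) * ‖w - wstar‖ ^ 2 := by
  intro w
  have hL : 0 < L := lt_of_lt_of_le hμ hμL
  set g : E := gradient F w with hgdef
  set d : E := w - wstar with hddef
  -- strong monotonicity
  have hmono : μ * ‖d‖ ^ 2 ≤ @inner ℝ _ _ g d := by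
    have h1 := grad_ineq μ F hFd hconv w wstar
    have h2 := grad_ineq μ F hFd hconv wstar w
    rw [hstar] at h2
    simp only [inner_zero_left] at h2
    have hsym : (@inner ℝ _ _ g (wstar - w)) = -(@inner ℝ _ _ g d) := by
      rw [hddef, ← inner_neg_right]; congr 1; abel
    rw [hsym] at h1
    have hnn : ‖wstar - w‖ = ‖d‖ := by rw [hddef, norm_sub_rev]
    have hnn2 : ‖w - wstar‖ = ‖d‖ := by rw [hddef]
    rw [hnn] at h1
    rw [hnn2] at h2
    linarith
  -- co-coercivity
  have hcoco : 1 / L * ‖g‖ ^ 2 ≤ @inner ℝ _ _ g d := by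
    have h1 := cocoercive_aux μ L hμ hL F hFd hconv hsmooth w wstar
    have h2 := cocoercive_aux μ L hμ hL F hFd hconv hsmooth wstar w
    rw [hstar] at h1 h2
    simp only [inner_zero_left, sub_zero, zero_sub, norm_neg] at h1 h2
    have hsym : (@inner ℝ _ _ g (wstar - w)) = -(@inner ℝ _ _ g d) := by
      rw [hddef, ← inner_neg_right]; congr 1; abel
    rw [hsym] at h2
    have h2L : 1 / (2 * L) + 1 / (2 * L) = 1 / L := by
      rw [← add_div, div_eq_div_iff (by positivity) (ne_of_gt hL)]; ring
    nlinarith [h1, h2]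
  -- expansion of the squared norm
  have hexp : ‖w - η • g - wstar‖ ^ 2
      = ‖d‖ ^ 2 - 2 * (η * @inner ℝ _ _ g d) + η ^ 2 * ‖g‖ ^ 2 := by
    have hrw : w - η • g - wstar = d - η • g := by rw [hddef]; abel
    rw [hrw, @norm_sub_sq_real, real_inner_smul_right, norm_smul, mul_pow,
      Real.norm_eq_abs, sq_abs, real_inner_comm]
  rw [hexp]
  have hgd : 0 ≤ @inner ℝ _ _ g d :=
    le_trans (by positivity) hcoco
  have hstep : η ^ 2 * ‖g‖ ^ 2 ≤ η * @inner ℝ _ _ g d := by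
    have : η * (η * ‖g‖ ^ 2) ≤ η * (1 / L * ‖g‖ ^ 2) := by
      apply mul_le_mul_of_nonneg_left _ hη0.le
      apply mul_le_mul_of_nonneg_right hη (by positivity)
    calc η ^ 2 * ‖g‖ ^ 2 = η * (η * ‖g‖ ^ 2) := by ring
      _ ≤ η * (1 / L * ‖g‖ ^ 2) := this
      _ ≤ η * @inner ℝ _ _ g d := mul_le_mul_of_nonneg_left hcoco hη0.le
  nlinarith [hmono, hstep, hη0]
end
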